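/- arXiv:0911.2280 — 2 statements merged into one kernel-verified Lean document; each statement's English description precedes it below -/
import Mathlib

section
/- Let $P$ be a column-stochastic $n \times n$ matrix whose corresponding Markov chain is irreducible, let $v$ be a fixed state, and let $Q = P$ with the row corresponding to $v$ set to zero (i.e., $Q = \mathrm{diag}(\mathbf{1} - e_v) P$). Then $\rho(Q) < 1$, so $I - Q$ is invertible. -/
open Matrix

section Stmt10Aux
variable {n : ℕ}

lemma stmt10_pow_nonneg (A : Matrix (Fin n) (Fin n) ℝ) (h0 : ∀ i j, 0 ≤ A i j) :
    ∀ m i j, 0 ≤ (A ^ m) i j := by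
  intro m
  induction m with
  | zero => intro i j; rw [pow_zero]; by_cases h : i = j <;> simp [Matrix.one_apply, h]
  | succ m ih =>
    intro i j
    rw [pow_succ, Matrix.mul_apply]
    exact Finset.sum_nonneg fun k _ => mul_nonneg (ih i k) (h0 k j)

lemma stmt10_colsum_mul_le (B C : Matrix (Fin n) (Fin n) ℝ)
    (hB1 : ∀ j, ∑ i, B i j ≤ 1) (hC0 : ∀ i j, 0 ≤ C i j) (j : Fin n) :
    ∑ i, (B * C) i j ≤ ∑ i, C i j := by
  simp only [Matrix.mul_apply]
  rw [Finset.sum_comm]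
  calc ∑ k, ∑ i, B i k * C k j = ∑ k, (∑ i, B i k) * C k j := by
        simp [Finset.sum_mul]
    _ ≤ ∑ k, 1 * C k j :=
        Finset.sum_le_sum fun k _ => mul_le_mul_of_nonneg_right (hB1 k) (hC0 k j)
    _ = ∑ k, C k j := by simp

lemma stmt10_colsum_pow_le_one (A : Matrix (Fin n) (Fin n) ℝ)
    (h0 : ∀ i j, 0 ≤ A i j) (h1 : ∀ j, ∑ i, A i j ≤ 1) :
    ∀ m j, ∑ i, (A ^ m) i j ≤ 1 := by
  intro m
  induction m with
  | zero => intro j; rw [pow_zero]; simp [Matrix.one_apply]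
  | succ m ih =>
    intro j
    rw [pow_succ']
    exact (stmt10_colsum_mul_le A (A ^ m) h1 (stmt10_pow_nonneg A h0 m) j).trans (ih j)

lemma stmt10_colsum_pow_mono (A : Matrix (Fin n) (Fin n) ℝ)
    (h0 : ∀ i j, 0 ≤ A i j) (h1 : ∀ j, ∑ i, A i j ≤ 1) (l m : ℕ) (j : Fin n) :
    ∑ i, (A ^ (l + m)) i j ≤ ∑ i, (A ^ m) i j := by
  rw [pow_add]
  exact stmt10_colsum_mul_le (A ^ l) (A ^ m)
    (stmt10_colsum_pow_le_one A h0 h1 l) (stmt10_pow_nonneg A h0 m) j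

lemma stmt10_pow_le_pow (A B : Matrix (Fin n) (Fin n) ℝ)
    (hA0 : ∀ i j, 0 ≤ A i j) (hAB : ∀ i j, A i j ≤ B i j) :
    ∀ m i j, (A ^ m) i j ≤ (B ^ m) i j := by
  intro m
  induction m with
  | zero => intro i j; rw [pow_zero, pow_zero]
  | succ m ih =>
    intro i j
    rw [pow_succ, pow_succ, Matrix.mul_apply, Matrix.mul_apply]
    refine Finset.sum_le_sum fun k _ => mul_le_mul (ih i k) (hAB k j)
      (hA0 k j) ?_
    exact le_trans (stmt10_pow_nonneg A hA0 m i k) (ih i k)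

lemma stmt10_row_zero_pow (A : Matrix (Fin n) (Fin n) ℝ) (v : Fin n)
    (hv : ∀ j, A v j = 0) (m : ℕ) (j : Fin n) : (A ^ (m + 1)) v j = 0 := by
  rw [pow_succ', Matrix.mul_apply]
  simp [hv]

lemma stmt10_colsum_pow_eq_one (A : Matrix (Fin n) (Fin n) ℝ)
    (h1 : ∀ j, ∑ i, A i j = 1) :
    ∀ m j, ∑ i, (A ^ m) i j = 1 := by
  intro m
  induction m with
  | zero => intro j; rw [pow_zero]; simp [Matrix.one_apply]
  | succ m ih =>
    intro j
    rw [pow_succ']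
    simp only [Matrix.mul_apply]
    rw [Finset.sum_comm]
    simp_rw [← Finset.sum_mul, h1, one_mul]
    exact ih j

lemma stmt10_mem_spectrum_transpose {A : Matrix (Fin n) (Fin n) ℂ} {μ : ℂ}
    (h : μ ∈ spectrum ℂ A) : μ ∈ spectrum ℂ Aᵀ := by
  rw [spectrum.mem_iff] at h ⊢
  intro hu
  apply h
  rw [Matrix.isUnit_iff_isUnit_det] at hu ⊢
  have he : (algebraMap ℂ (Matrix (Fin n) (Fin n) ℂ) μ - Aᵀ)
      = (algebraMap ℂ (Matrix (Fin n) (Fin n) ℂ) μ - A)ᵀ := by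
    simp [Matrix.transpose_sub, Algebra.algebraMap_eq_smul_one]
  rw [he, Matrix.det_transpose] at hu
  exact hu

end Stmt10Aux

attribute [local instance] Matrix.linftyOpNormedAddCommGroup Matrix.linftyOpNormedRing
  Matrix.linftyOpNormedAlgebra

theorem stmt_10 (n : ℕ) (P : Matrix (Fin n) (Fin n) ℝ)
    (hP0 : ∀ i j, 0 ≤ P i j) (hP1 : ∀ j, ∑ i, P i j = 1)
    (hirr : ∀ i j, ∃ k : ℕ, 0 < (P ^ k) j i)
    (v : Fin n)
    (Q : Matrix (Fin n) (Fin n) ℝ)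
    (hQ : Q = Matrix.diagonal (fun j => if j = v then (0 : ℝ) else 1) * P) :
    (∀ μ ∈ spectrum ℂ (Q.map (algebraMap ℝ ℂ)), ‖μ‖ < 1) ∧
      IsUnit ((1 : Matrix (Fin n) (Fin n) ℝ) - Q) := by
  rcases Nat.eq_zero_or_pos n with hn | hn
  · subst hn
    haveI : Subsingleton (Matrix (Fin 0) (Fin 0) ℝ) :=
      ⟨fun a b => by ext i j; exact i.elim0⟩
    haveI : Subsingleton (Matrix (Fin 0) (Fin 0) ℂ) :=
      ⟨fun a b => by ext i j; exact i.elim0⟩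
    refine ⟨fun μ hμ => ?_, isUnit_of_subsingleton _⟩
    rw [spectrum.mem_iff] at hμ
    exact absurd (isUnit_of_subsingleton _) hμ
  haveI : Nonempty (Fin n) := ⟨⟨0, hn⟩⟩
  have hQij : ∀ i j, Q i j = if i = v then 0 else P i j := by
    intro i j
    rw [hQ, Matrix.diagonal_mul]
    by_cases h : i = v <;> simp [h]
  have hQ0 : ∀ i j, 0 ≤ Q i j := by
    intro i j
    rw [hQij]
    split
    · exact le_refl 0
    · exact hP0 i j
  have hQle : ∀ i j, Q i j ≤ P i j := by
    intro i j
    rw [hQij]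
    split
    · exact hP0 i j
    · exact le_refl _
  have hQv : ∀ j, Q v j = 0 := fun j => by simp [hQij]
  have hQ1 : ∀ j, ∑ i, Q i j ≤ 1 := fun j => by
    calc ∑ i, Q i j ≤ ∑ i, P i j := Finset.sum_le_sum fun i _ => hQle i j
    _ = 1 := hP1 j
  have hex : ∀ j, ∃ k, 0 < k ∧ 0 < (P ^ k) v j := by
    intro j
    obtain ⟨k, hk⟩ := hirr j v
    rcases Nat.eq_zero_or_pos k with hk0 | hk0
    · subst hk0
      rw [pow_zero] at hk
      have hvj : v = j := by
        by_contra hne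
        rw [Matrix.one_apply_ne hne] at hk
        exact lt_irrefl 0 hk
      subst hvj
      have hexi : ∃ i, 0 < P i v := by
        by_contra hno
        push_neg at hno
        have hz : ∑ i, P i v = 0 :=
          Finset.sum_eq_zero fun i _ => le_antisymm (hno i) (hP0 i v)
        rw [hP1 v] at hz
        norm_num at hz
      obtain ⟨i, hi⟩ := hexi
      obtain ⟨k', hk'⟩ := hirr i v
      refine ⟨k' + 1, Nat.succ_pos _, ?_⟩
      rw [pow_succ, Matrix.mul_apply]
      exact lt_of_lt_of_le (mul_pos hk' hi)
        (Finset.single_le_sum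
          (fun m _ => mul_nonneg (stmt10_pow_nonneg P hP0 k' v m) (hP0 m v))
          (Finset.mem_univ i))
    · exact ⟨k, hk0, hk⟩
  choose k hkpos hkP using hex
  set K := Finset.univ.sup k with hK
  have hKk : ∀ j, k j ≤ K := fun j => Finset.le_sup (Finset.mem_univ j)
  have colK : ∀ j, ∑ i, (Q ^ K) i j < 1 := by
    intro j
    have h1 : ∑ i, (Q ^ K) i j ≤ ∑ i, (Q ^ (k j)) i j := by
      have hsub : K - k j + k j = K := Nat.sub_add_cancel (hKk j)
      calc ∑ i, (Q ^ K) i j = ∑ i, (Q ^ (K - k j + k j)) i j := by rw [hsub]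
        _ ≤ _ := stmt10_colsum_pow_mono Q hQ0 hQ1 _ _ j
    have h2 : ∑ i, (Q ^ (k j)) i j ≤ 1 - (P ^ (k j)) v j := by
      rcases Nat.exists_eq_succ_of_ne_zero (hkpos j).ne' with ⟨m, hm⟩
      calc ∑ i, (Q ^ (k j)) i j
          ≤ ∑ i, ((P ^ (k j)) i j - if i = v then (P ^ (k j)) v j else 0) := by
            refine Finset.sum_le_sum fun i _ => ?_
            by_cases h : i = v
            · simp only [h, if_pos]
              rw [hm, stmt10_row_zero_pow Q v hQv m j]
              simp
            · simp only [h, if_neg, sub_zero, if_false]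
              exact stmt10_pow_le_pow Q P hQ0 hQle _ i j
        _ = 1 - (P ^ (k j)) v j := by
            rw [Finset.sum_sub_distrib, stmt10_colsum_pow_eq_one P hP1]
            simp
    have := hkP j
    linarith
  set f := algebraMap ℝ ℂ with hf
  set A := Q.map f with hA
  have hAK : (Aᵀ) ^ K = ((Q ^ K).map f)ᵀ := by
    have h1 : A ^ K = (Q ^ K).map ⇑f := by
      simpa [RingHom.mapMatrix_apply] using (map_pow f.mapMatrix Q K).symm
    rw [← h1, Matrix.transpose_pow]
  have hnorm : ‖(Aᵀ) ^ K‖ < 1 := by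
    rw [hAK, Matrix.linfty_opNorm_def]
    have hsup : ((Finset.univ : Finset (Fin n)).sup
        fun i => ∑ jj, ‖((Q ^ K).map f)ᵀ i jj‖₊) < (1 : NNReal) := by
      rw [Finset.sup_lt_iff (by norm_num : (⊥ : NNReal) < 1)]
      intro i _
      rw [← NNReal.coe_lt_coe]
      push_cast
      have hcoe : ∀ jj, ‖((Q ^ K).map ⇑f)ᵀ i jj‖ = (Q ^ K) jj i := by
        intro jj
        rw [Matrix.transpose_apply, Matrix.map_apply, hf]
        simp [Complex.norm_real, Real.norm_eq_abs,
          abs_of_nonneg (stmt10_pow_nonneg Q hQ0 K jj i)]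
      rw [Finset.sum_congr rfl fun jj _ => hcoe jj]
      exact colK i
    calc ((((Finset.univ : Finset (Fin n)).sup
        fun i => ∑ jj, ‖((Q ^ K).map f)ᵀ i jj‖₊) : NNReal) : ℝ)
        < ((1 : NNReal) : ℝ) := NNReal.coe_lt_coe.mpr hsup
      _ = 1 := by norm_num
  have main : ∀ μ ∈ spectrum ℂ A, ‖μ‖ < 1 := by
    intro μ hμ
    have h2 := stmt10_mem_spectrum_transpose hμ
    have h3 : μ ^ K ∈ spectrum ℂ ((Aᵀ) ^ K) :=
      spectrum.pow_image_subset _ K ⟨μ, h2, rfl⟩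
    have h4 : ‖μ ^ K‖ ≤ ‖(Aᵀ) ^ K‖ := spectrum.norm_le_norm_of_mem h3
    rw [norm_pow] at h4
    by_contra hc
    push_neg at hc
    have h5 : (1 : ℝ) ≤ ‖μ‖ ^ K := by
      calc (1 : ℝ) = 1 ^ K := (one_pow K).symm
        _ ≤ ‖μ‖ ^ K := pow_le_pow_left₀ zero_le_one hc K
    linarith
  refine ⟨main, ?_⟩
  have h1s : (1 : ℂ) ∉ spectrum ℂ A := fun h => by simpa using main 1 h
  rw [spectrum.notMem_iff] at h1s
  have heq : algebraMap ℂ (Matrix (Fin n) (Fin n) ℂ) 1 - A = (1 - Q).map f := by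
    rw [_root_.map_one]
    have : (1 - Q).map f = f.mapMatrix (1 - Q) := (RingHom.mapMatrix_apply _ _).symm
    rw [this, _root_.map_sub, _root_.map_one, RingHom.mapMatrix_apply, hA]
  rw [heq, Matrix.isUnit_iff_isUnit_det, ← RingHom.mapMatrix_apply, ← RingHom.map_det] at h1s
  rw [Matrix.isUnit_iff_isUnit_det]
  rw [isUnit_iff_ne_zero] at h1s ⊢
  intro h0
  rw [h0, map_zero] at h1s
  exact h1s rfl
end

section
/- Let $G$ be an $n \times n$ column-stochastic matrix with all entries strictly positive, and let $\pi$ be its stationary distribution ($G\pi = \pi$, $\pi$ stochastic). Then for any stochastic vector $x_0$, the power iteration $x_{k+1} = G x_k$ converges to $\pi$: $\lim_{k\to\infty} x_k = \pi$. -/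
open Matrix Filter

theorem stmt_17 (n : ℕ) (G : Matrix (Fin n) (Fin n) ℝ)
    (hG0 : ∀ i j, 0 < G i j) (hG1 : ∀ j, ∑ i, G i j = 1)
    (pr : Fin n → ℝ) (hpr0 : ∀ i, 0 ≤ pr i) (hpr1 : ∑ i, pr i = 1)
    (hstat : G *ᵥ pr = pr)
    (x0 : Fin n → ℝ) (hx00 : ∀ i, 0 ≤ x0 i) (hx01 : ∑ i, x0 i = 1) :
    Tendsto (fun k : ℕ => (G ^ k) *ᵥ x0) atTop (nhds pr) := by
  rcases Nat.eq_zero_or_pos n with hn | hn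
  · subst hn
    have : (fun k : ℕ => (G ^ k) *ᵥ x0) = fun _ => pr := by
      funext k i; exact i.elim0
    rw [this]; exact tendsto_const_nhds
  · have hne : (Finset.univ : Finset (Fin n)).Nonempty := by
      refine Finset.univ_nonempty_iff.mpr ?_
      exact Fin.pos_iff_nonempty.mp hn
    have hne2 : (Finset.univ : Finset (Fin n × Fin n)).Nonempty := by
      refine Finset.univ_nonempty_iff.mpr ?_
      obtain ⟨i⟩ := Fin.pos_iff_nonempty.mp hn
      exact ⟨(i, i)⟩
    set c : ℝ := Finset.univ.inf' hne2 (fun p : Fin n × Fin n => G p.1 p.2) with hc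
    have hc_le : ∀ i j, c ≤ G i j := fun i j =>
      Finset.inf'_le _ (Finset.mem_univ (i, j))
    have hc_pos : 0 < c := by
      rw [hc, Finset.lt_inf'_iff]
      exact fun p _ => hG0 p.1 p.2
    set r : ℝ := 1 - (n : ℝ) * c with hrdef
    obtain ⟨j0⟩ := Fin.pos_iff_nonempty.mp hn
    have hnc_le : (n : ℝ) * c ≤ 1 := by
      have : ∑ _i : Fin n, c ≤ ∑ i, G i j0 := Finset.sum_le_sum fun i _ => hc_le i j0
      simpa [hG1 j0, Finset.card_univ] using this
    have hr0 : 0 ≤ r := by simp [hrdef]; linarith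
    have hr1 : r < 1 := by
      have : 0 < (n : ℝ) * c := by positivity
      simp [hrdef]; linarith
    -- column sums of r-shifted matrix
    have hcol : ∀ j, ∑ i, (G i j - c) = r := by
      intro j
      rw [Finset.sum_sub_distrib, hG1 j, Finset.sum_const, Finset.card_univ,
        Fintype.card_fin, nsmul_eq_mul, hrdef]
    have hGsum : ∀ y : Fin n → ℝ, ∑ i, y i = 0 → ∑ i, (G *ᵥ y) i = 0 := by
      intro y hy
      simp only [mulVec, dotProduct]
      rw [Finset.sum_comm]
      calc ∑ j, ∑ _i, G _i j * y j = ∑ j, (∑ i, G i j) * y j := by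
            simp [Finset.sum_mul]
        _ = ∑ j, y j := by simp [hG1]
        _ = 0 := hy
    have hGbound : ∀ y : Fin n → ℝ, ∑ i, y i = 0 →
        ∑ i, |(G *ᵥ y) i| ≤ r * ∑ i, |y i| := by
      intro y hy
      have h1 : ∀ i, |(G *ᵥ y) i| ≤ ∑ j, (G i j - c) * |y j| := by
        intro i
        have he : (G *ᵥ y) i = ∑ j, (G i j - c) * y j := by
          simp only [mulVec, dotProduct, sub_mul, Finset.sum_sub_distrib,
            ← Finset.mul_sum, hy, mul_zero, sub_zero]
        rw [he]
        refine (Finset.abs_sum_le_sum_abs _ _).trans ?_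
        refine Finset.sum_le_sum fun j _ => ?_
        rw [abs_mul, abs_of_nonneg (sub_nonneg.2 (hc_le i j))]
      calc ∑ i, |(G *ᵥ y) i| ≤ ∑ i, ∑ j, (G i j - c) * |y j| :=
            Finset.sum_le_sum fun i _ => h1 i
        _ = ∑ j, r * |y j| := by
            rw [Finset.sum_comm]
            refine Finset.sum_congr rfl fun j _ => ?_
            rw [← Finset.sum_mul, hcol j]
        _ = r * ∑ j, |y j| := by rw [Finset.mul_sum]
    have hGpr : ∀ k, (G ^ k) *ᵥ pr = pr := by
      intro k; induction k with
      | zero => simp [Matrix.one_mulVec]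
      | succ k ih => rw [pow_succ, ← mulVec_mulVec, hstat, ih]
    have hsum0 : ∑ i, (x0 - pr) i = 0 := by
      simp only [Pi.sub_apply]
      rw [Finset.sum_sub_distrib, hx01, hpr1, sub_self]
    have key : ∀ k, ∑ i, ((G ^ k) *ᵥ (x0 - pr)) i = 0 ∧
        ∑ i, |((G ^ k) *ᵥ (x0 - pr)) i| ≤ r ^ k * ∑ i, |(x0 - pr) i| := by
      intro k; induction k with
      | zero =>
        refine ⟨?_, ?_⟩ <;> simp only [pow_zero, Matrix.one_mulVec]
        · exact hsum0
        · simp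
      | succ k ih =>
        have hstep : (G ^ (k + 1)) *ᵥ (x0 - pr) = G *ᵥ ((G ^ k) *ᵥ (x0 - pr)) := by
          rw [mulVec_mulVec, ← pow_succ']
        constructor
        · rw [hstep]; exact hGsum _ ih.1
        · rw [hstep]
          calc ∑ i, |(G *ᵥ ((G ^ k) *ᵥ (x0 - pr))) i|
              ≤ r * ∑ i, |((G ^ k) *ᵥ (x0 - pr)) i| := hGbound _ ih.1
            _ ≤ r * (r ^ k * ∑ i, |(x0 - pr) i|) := by
                exact mul_le_mul_of_nonneg_left ih.2 hr0
            _ = r ^ (k + 1) * ∑ i, |(x0 - pr) i| := by ring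
    -- conclude via norms
    rw [tendsto_iff_norm_sub_tendsto_zero]
    have hbound : ∀ k : ℕ, ‖(G ^ k) *ᵥ x0 - pr‖ ≤ r ^ k * ∑ i, |(x0 - pr) i| := by
      intro k
      have hE : (G ^ k) *ᵥ x0 - pr = (G ^ k) *ᵥ (x0 - pr) := by
        rw [mulVec_sub, hGpr k]
      rw [hE]
      have hpos : 0 ≤ r ^ k * ∑ i, |(x0 - pr) i| := by positivity
      rw [pi_norm_le_iff_of_nonneg hpos]
      intro i
      calc ‖((G ^ k) *ᵥ (x0 - pr)) i‖ = |((G ^ k) *ᵥ (x0 - pr)) i| := rfl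
        _ ≤ ∑ j, |((G ^ k) *ᵥ (x0 - pr)) j| :=
            Finset.single_le_sum (f := fun j => |((G ^ k) *ᵥ (x0 - pr)) j|) (fun j _ => abs_nonneg _) (Finset.mem_univ i)
        _ ≤ r ^ k * ∑ i, |(x0 - pr) i| := (key k).2
    have hlim : Tendsto (fun k : ℕ => r ^ k * ∑ i, |(x0 - pr) i|) atTop (nhds 0) := by
      have := tendsto_pow_atTop_nhds_zero_of_lt_one hr0 hr1
      simpa using this.mul_const _
    exact squeeze_zero (fun k => norm_nonneg _) hbound hlim
end
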